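/- arXiv:1510.04931 — 3 statements merged into one kernel-verified Lean document; each statement's English description precedes it below -/
import Mathlib

section
/- Let ρ and ρ' be CCSs and q, q' ≥ 0 with q + q' ≤ 1, and let ν := q·ρ + q'·ρ' (a CCS). Then for every policy π and every history h = ae_{<t} with Γ_t > 0 and ν(e_{<t} ∣ a_{<t}) > 0, V^π_ν(h) = q·(ρ(e_{<t} ∣ a_{<t})/ν(e_{<t} ∣ a_{<t}))·V^π_ρ(h) + q'·(ρ'(e_{<t} ∣ a_{<t})/ν(e_{<t} ∣ a_{<t}))·V^π_{ρ'}(h), where a summand is read as 0 if the corresponding semimeasure vanishes at h. The same identity holds for histories ending in an action, i.e., for V^π_ν(h a) with a ∈ A. -/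
open scoped Classical

/-- A history: a finite alternating sequence of action–percept pairs. -/
abbrev Hist (A E : Type*) := List (A × E)

/-- A policy maps histories to actions. -/
abbrev Policy (A E : Type*) := Hist A E → A

/-- A chronological conditional semimeasure (CCS, environment):
values in `[0,1]`, and the chronological semimeasure condition. -/
structure CCS (A E : Type*) [Fintype E] where
  val : Hist A E → ℝ
  nonneg : ∀ h, 0 ≤ val h
  le_one : ∀ h, val h ≤ 1
  chrono : ∀ (h : Hist A E) (a : A), (∑ e : E, val (h ++ [(a, e)])) ≤ val h

/-- `Gam γ t = Γ_t = ∑_{i ≥ t} γ_i`, the discount normalization factor. -/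
noncomputable def Gam (γ : ℕ → ℝ) (t : ℕ) : ℝ := ∑' i : ℕ, γ (t + i)

/-- Extend a history by a list of percepts, with actions chosen by the policy `π`. -/
def extendH {A E : Type*} (π : Policy A E) : Hist A E → List E → Hist A E
  | h, [] => h
  | h, e :: es => extendH π (h ++ [(π h, e)]) es

/-- The value `V^π_ν(ae_{<t})` of policy `π` in environment `ν` given history `h = ae_{<t}`
(with `t = h.length + 1`); `0` whenever `Γ_t ≤ 0` or `ν(e_{<t} ∣ a_{<t}) ≤ 0`. -/
noncomputable def V {A E : Type*} [Fintype E] (γ : ℕ → ℝ) (r : E → ℝ)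
    (π : Policy A E) (ν : CCS A E) (h : Hist A E) : ℝ :=
  if 0 < Gam γ (h.length + 1) ∧ 0 < ν.val h then
    (1 / (Gam γ (h.length + 1) * ν.val h)) *
      ∑' n : ℕ, γ (h.length + 1 + n) *
        ∑ es : Fin (n + 1) → E,
          r (es (Fin.last n)) * ν.val (extendH π h (List.ofFn es))
  else 0

/-- The value `V^π_ν(h a)` of a history ending in the action `a`:
the action at time `t` is `a`, and `π` is followed from time `t+1` on. -/
noncomputable def Vact {A E : Type*} [Fintype E] (γ : ℕ → ℝ) (r : E → ℝ)
    (π : Policy A E) (ν : CCS A E) (h : Hist A E) (a : A) : ℝ :=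
  V γ r (fun h' => if h' = h then a else π h') ν h

/-- The optimal value `V^*_ν(h) = sup_π V^π_ν(h)`. -/
noncomputable def VOpt {A E : Type*} [Fintype E] (γ : ℕ → ℝ) (r : E → ℝ)
    (ν : CCS A E) (h : Hist A E) : ℝ :=
  ⨆ π : Policy A E, V γ r π ν h

/-- The optimal value `V^*_ν(h a)` of a history ending in an action. -/
noncomputable def VOptAct {A E : Type*} [Fintype E] (γ : ℕ → ℝ) (r : E → ℝ)
    (ν : CCS A E) (h : Hist A E) (a : A) : ℝ :=
  ⨆ π : Policy A E, Vact γ r π ν h a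

/-- A history is consistent with `π` iff each of its actions is the one chosen by `π`. -/
def Consistent {A E : Type*} (π : Policy A E) (h : Hist A E) : Prop :=
  ∀ (k : ℕ) (hk : k < h.length), (h.get ⟨k, hk⟩).1 = π (h.take k)


/-!
Up to the normalisation `1 / (Γ_t · μ(h))`, the value `V^π_μ(h)` is the discounted sum of the
expected rewards `∑ r(e_k) μ(e_{1:k} ∣ a_{1:k})`, which is linear in `μ`. Hence
`μ(h) · V^π_μ(h) · Γ_t` is linear in `μ` (for `μ(h) = 0` both sides vanish, since then every
extension of `h` has measure `0`), and dividing by `ν(h) > 0` gives the identity. The action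
version is the same identity for the policy that plays `a` at `h`.
-/

namespace CCS

variable {A E : Type*} [Fintype E]

theorem sum_val_extendH_ofFn_le (μ : CCS A E) (π : Policy A E) :
    ∀ (n : ℕ) (h : Hist A E), ∑ es : Fin n → E, μ.val (extendH π h (List.ofFn es)) ≤ μ.val h
  | 0, h => by simp [extendH]
  | n + 1, h => by
    rw [← (Fin.consEquiv fun _ : Fin (n + 1) => E).sum_comp, Fintype.sum_prod_type]
    calc ∑ e : E, ∑ es : Fin n → E, μ.val (extendH π h (List.ofFn (Fin.cons e es)))
        = ∑ e : E, ∑ es : Fin n → E, μ.val (extendH π (h ++ [(π h, e)]) (List.ofFn es)) := by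
          simp [List.ofFn_succ, extendH]
      _ ≤ ∑ e : E, μ.val (h ++ [(π h, e)]) :=
          Finset.sum_le_sum fun e _ => sum_val_extendH_ofFn_le μ π n _
      _ ≤ μ.val h := μ.chrono h (π h)

end CCS

section Value

variable {A E : Type*} [Fintype E] (γ : ℕ → ℝ) (r : E → ℝ) (π : Policy A E)

/-- The expected reward `∑_{e_{t:t+n}} r(e_{t+n}) μ(e_{1:t+n} ∣ a_{1:t+n})` at time `t + n`,
not normalised by `μ(h)`. -/
noncomputable def expectedReward (μ : CCS A E) (h : Hist A E) (n : ℕ) : ℝ :=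
  ∑ es : Fin (n + 1) → E, r (es (Fin.last n)) * μ.val (extendH π h (List.ofFn es))

noncomputable def discountedReward (μ : CCS A E) (h : Hist A E) : ℝ :=
  ∑' n : ℕ, γ (h.length + 1 + n) * expectedReward r π μ h n

theorem V_eq_ite (μ : CCS A E) (h : Hist A E) :
    V γ r π μ h =
      if 0 < Gam γ (h.length + 1) ∧ 0 < μ.val h then
        1 / (Gam γ (h.length + 1) * μ.val h) * discountedReward γ r π μ h
      else 0 :=
  rfl

theorem abs_expectedReward_le (μ : CCS A E) (h : Hist A E) (n : ℕ) :
    |expectedReward r π μ h n| ≤ (∑ e, |r e|) * μ.val h :=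
  calc |expectedReward r π μ h n|
      ≤ ∑ es : Fin (n + 1) → E, (∑ e, |r e|) * μ.val (extendH π h (List.ofFn es)) := by
        refine (Finset.abs_sum_le_sum_abs _ _).trans (Finset.sum_le_sum fun es _ => ?_)
        rw [abs_mul, abs_of_nonneg (μ.nonneg _)]
        exact mul_le_mul_of_nonneg_right (Finset.single_le_sum (f := fun e => |r e|)
          (fun e _ => abs_nonneg _) (Finset.mem_univ _)) (μ.nonneg _)
    _ ≤ (∑ e, |r e|) * μ.val h := by
        rw [← Finset.mul_sum]
        gcongr
        exact μ.sum_val_extendH_ofFn_le π (n + 1) h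

theorem summable_discounted_expectedReward (hγ : Summable γ) (μ : CCS A E) (h : Hist A E) :
    Summable fun n => γ (h.length + 1 + n) * expectedReward r π μ h n := by
  refine Summable.of_norm_bounded
    ((((summable_nat_add_iff (h.length + 1)).2 hγ).norm).mul_right (∑ e, |r e|)) fun n => ?_
  rw [norm_mul, Real.norm_eq_abs, Real.norm_eq_abs, add_comm n]
  refine mul_le_mul_of_nonneg_left ?_ (abs_nonneg _)
  exact (abs_expectedReward_le r π μ h n).trans
    (mul_le_of_le_one_right (Finset.sum_nonneg fun e _ => abs_nonneg _) (μ.le_one h))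

variable {q q' : ℝ} {ρ ρ' ν : CCS A E}

theorem expectedReward_mixture (hν : ∀ h, ν.val h = q * ρ.val h + q' * ρ'.val h)
    (h : Hist A E) (n : ℕ) :
    expectedReward r π ν h n = q * expectedReward r π ρ h n + q' * expectedReward r π ρ' h n := by
  simp only [expectedReward, hν, Finset.mul_sum, ← Finset.sum_add_distrib]
  exact Finset.sum_congr rfl fun es _ => by ring

theorem discountedReward_mixture (hγ : Summable γ)
    (hν : ∀ h, ν.val h = q * ρ.val h + q' * ρ'.val h) (h : Hist A E) :
    discountedReward γ r π ν h =
      q * discountedReward γ r π ρ h + q' * discountedReward γ r π ρ' h := by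
  simp only [discountedReward, expectedReward_mixture r π hν, mul_add, mul_left_comm _ q,
    mul_left_comm _ q']
  rw [((summable_discounted_expectedReward γ r π hγ ρ h).mul_left q).tsum_add
    ((summable_discounted_expectedReward γ r π hγ ρ' h).mul_left q'), tsum_mul_left, tsum_mul_left]

theorem val_mul_V {h : Hist A E} (hΓ : 0 < Gam γ (h.length + 1)) (μ : CCS A E) :
    μ.val h * V γ r π μ h = discountedReward γ r π μ h / Gam γ (h.length + 1) := by
  rcases (μ.nonneg h).eq_or_lt with hm0 | hm
  · have hzero : ∀ n, expectedReward r π μ h n = 0 := fun n =>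
      abs_nonpos_iff.mp (by simpa [← hm0] using abs_expectedReward_le r π μ h n)
    simp [← hm0, discountedReward, hzero]
  · rw [V_eq_ite, if_pos ⟨hΓ, hm⟩]
    field_simp

theorem V_mixture (hγ : Summable γ) (hν : ∀ h, ν.val h = q * ρ.val h + q' * ρ'.val h)
    {h : Hist A E} (hΓ : 0 < Gam γ (h.length + 1)) (hpos : 0 < ν.val h) :
    V γ r π ν h =
      q * (ρ.val h / ν.val h) * V γ r π ρ h + q' * (ρ'.val h / ν.val h) * V γ r π ρ' h := by
  refine mul_left_cancel₀ hpos.ne' ?_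
  calc ν.val h * V γ r π ν h
      = q * (ρ.val h * V γ r π ρ h) + q' * (ρ'.val h * V γ r π ρ' h) := by
        rw [val_mul_V γ r π hΓ, val_mul_V γ r π hΓ, val_mul_V γ r π hΓ,
          discountedReward_mixture γ r π hγ hν]
        ring
    _ = ν.val h *
          (q * (ρ.val h / ν.val h) * V γ r π ρ h + q' * (ρ'.val h / ν.val h) * V γ r π ρ' h) := by
        field_simp

end Value

theorem value_linear_general {A E : Type*} [Fintype E]
    (γ : ℕ → ℝ) (hγs : Summable γ) (r : E → ℝ) (q q' : ℝ) (ρ ρ' ν : CCS A E)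
    (hν : ∀ h : Hist A E, ν.val h = q * ρ.val h + q' * ρ'.val h)
    (π : Policy A E) (h : Hist A E)
    (hΓ : 0 < Gam γ (h.length + 1)) (hpos : 0 < ν.val h) :
    (V γ r π ν h =
        q * (ρ.val h / ν.val h) * V γ r π ρ h +
        q' * (ρ'.val h / ν.val h) * V γ r π ρ' h) ∧
    (∀ a : A, Vact γ r π ν h a =
        q * (ρ.val h / ν.val h) * Vact γ r π ρ h a +
        q' * (ρ'.val h / ν.val h) * Vact γ r π ρ' h a) :=
  ⟨V_mixture γ r π hγs hν hΓ hpos, fun _ => V_mixture γ r _ hγs hν hΓ hpos⟩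

/-- **Linearity of the value in the environment.** For `ν = q·ρ + q'·ρ'`,
`V^π_ν(h)` is the posterior-weighted combination of `V^π_ρ(h)` and `V^π_{ρ'}(h)`;
likewise for histories ending in an action. -/
theorem value_linear {A E : Type*} [Fintype A] [Nonempty A] [Fintype E] [Nonempty E]
    (γ : ℕ → ℝ) (hγ0 : ∀ t, 0 ≤ γ t) (hγs : Summable γ)
    (r : E → ℝ) (hr : ∀ e : E, 0 ≤ r e ∧ r e ≤ 1)
    (q q' : ℝ) (hq : 0 ≤ q) (hq' : 0 ≤ q') (hqq' : q + q' ≤ 1)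
    (ρ ρ' ν : CCS A E)
    (hν : ∀ h : Hist A E, ν.val h = q * ρ.val h + q' * ρ'.val h)
    (π : Policy A E) (h : Hist A E)
    (hΓ : 0 < Gam γ (h.length + 1)) (hpos : 0 < ν.val h) :
    (V γ r π ν h =
        q * (ρ.val h / ν.val h) * V γ r π ρ h +
        q' * (ρ'.val h / ν.val h) * V γ r π ρ' h) ∧
    (∀ a : A, Vact γ r π ν h a =
        q * (ρ.val h / ν.val h) * Vact γ r π ρ h a +
        q' * (ρ'.val h / ν.val h) * Vact γ r π ρ' h a) :=
  value_linear_general γ hγs r q q' ρ ρ' ν hν π h hΓ hpos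
end

section
/- Let ξ be a CCS, π a policy, e⁰ ∈ E with r(e⁰) = 0, ε ∈ (0,1], ν the π-dogmatic environment for ξ, and ξ' := (1/2)·ν + (ε/2)·ξ. Then for every history h = ae_{<t} consistent with π with ξ(e_{<t} ∣ a_{<t}) > 0: (i) ν(e_{<t} ∣ a_{<t}) = ξ(e_{<t} ∣ a_{<t}); (ii) ξ'(e_{<t} ∣ a_{<t}) = ((1+ε)/2)·ξ(e_{<t} ∣ a_{<t}); and (iii) if moreover Γ_t > 0, then for every policy π̃ and every action a ∈ A, V^{π̃}_{ξ'}(ha) = (1/(1+ε))·V^{π̃}_ν(ha) + (ε/(1+ε))·V^{π̃}_ξ(ha). -/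
open scoped Classical

/-- Auxiliary function for the dogmatic environment: `pre` is the consistent
prefix processed so far, the second argument is the rest of the history. -/
noncomputable def dogmaAux {A E : Type*} [Fintype E] (ξ : CCS A E) (π : Policy A E)
    (e0 : E) : Hist A E → Hist A E → ℝ
  | pre, [] => ξ.val pre
  | pre, (a, e) :: rest =>
    if a = π pre then dogmaAux ξ π e0 (pre ++ [(a, e)]) rest
    else if e = e0 ∧ ∀ p ∈ rest, p.2 = e0 then ξ.val pre else 0

/-- The `π`-dogmatic environment for `ξ`: mimics `ξ` while the actions follow `π`;
from the first deviation on it deterministically emits `e0` and freezes the mass. -/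
noncomputable def dogma {A E : Type*} [Fintype E] (ξ : CCS A E) (π : Policy A E)
    (e0 : E) (h : Hist A E) : ℝ :=
  dogmaAux ξ π e0 [] h

/-- A CCS has full support iff it is positive on every history. -/
def FullSupport {A E : Type*} [Fintype E] (ξ : CCS A E) : Prop :=
  ∀ h : Hist A E, 0 < ξ.val h

private lemma dogmaAux_consistent {A E : Type*} [Fintype E] (ξ : CCS A E) (π : Policy A E)
    (e0 : E) (rest : Hist A E) :
    ∀ (pre : Hist A E),
      (∀ (k : ℕ) (hk : k < rest.length), (rest.get ⟨k, hk⟩).1 = π (pre ++ rest.take k)) →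
      dogmaAux ξ π e0 pre rest = ξ.val (pre ++ rest) := by
  induction rest with
  | nil => intro pre _; simp [dogmaAux]
  | cons pe rest ih =>
    intro pre hc
    obtain ⟨a, e⟩ := pe
    have h0 : a = π pre := by simpa using hc 0 (by simp)
    rw [dogmaAux, if_pos h0, ih (pre ++ [(a, e)]) ?_]
    · simp
    · intro k hk
      have := hc (k + 1) (by simpa using Nat.succ_lt_succ hk)
      simpa [List.append_assoc] using this

private lemma sum_split {E : Type*} [Fintype E] (n : ℕ) (f : (Fin (n + 1) → E) → ℝ) :
    ∑ es : Fin (n + 1) → E, f es = ∑ e : E, ∑ es : Fin n → E, f (Fin.cons e es) := by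
  rw [← (Fin.consEquiv fun _ : Fin (n + 1) => E).sum_comp f, Fintype.sum_prod_type]
  rfl

private lemma sum_extendH_le {A E : Type*} [Fintype E] (μ : CCS A E) (p : Policy A E) :
    ∀ (n : ℕ) (h : Hist A E),
      ∑ es : Fin n → E, μ.val (extendH p h (List.ofFn es)) ≤ μ.val h := by
  intro n
  induction n with
  | zero => intro h; simp [extendH]
  | succ n ih =>
    intro h
    calc ∑ es : Fin (n + 1) → E, μ.val (extendH p h (List.ofFn es))
        = ∑ e : E, ∑ es : Fin n → E, μ.val (extendH p (h ++ [(p h, e)]) (List.ofFn es)) := by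
          rw [sum_split]
          refine Finset.sum_congr rfl fun e _ => Finset.sum_congr rfl fun es _ => ?_
          simp [List.ofFn_succ, extendH]
      _ ≤ ∑ e : E, μ.val (h ++ [(p h, e)]) := Finset.sum_le_sum fun e _ => ih _
      _ ≤ μ.val h := μ.chrono h (p h)

/-- On `π`-consistent histories, the dogmatic `ν` agrees with `ξ`, the posterior weight
of `ν` in `ξ' = (1/2)·ν + (ε/2)·ξ` is constant, and values decompose linearly. -/
theorem dogmatic_posterior {A E : Type*} [Fintype A] [Nonempty A] [Fintype E] [Nonempty E]
    (γ : ℕ → ℝ) (hγ0 : ∀ t, 0 ≤ γ t) (hγs : Summable γ)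
    (r : E → ℝ) (hr : ∀ e : E, 0 ≤ r e ∧ r e ≤ 1)
    (ξ : CCS A E) (π : Policy A E) (e0 : E) (hr0 : r e0 = 0)
    (ε : ℝ) (hε0 : 0 < ε) (hε1 : ε ≤ 1)
    (ν ξ' : CCS A E)
    (hν : ∀ h : Hist A E, ν.val h = dogma ξ π e0 h)
    (hξ' : ∀ h : Hist A E, ξ'.val h = (1 / 2) * ν.val h + (ε / 2) * ξ.val h)
    (h : Hist A E) (hcons : Consistent π h) (hpos : 0 < ξ.val h) :
    (ν.val h = ξ.val h) ∧
    (ξ'.val h = ((1 + ε) / 2) * ξ.val h) ∧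
    (0 < Gam γ (h.length + 1) →
      ∀ (πt : Policy A E) (a : A),
        Vact γ r πt ξ' h a =
          (1 / (1 + ε)) * Vact γ r πt ν h a + (ε / (1 + ε)) * Vact γ r πt ξ h a) := by
  have hνξ : ν.val h = ξ.val h := by
    have hd := dogmaAux_consistent ξ π e0 h []
      (by intro k hk; simpa using hcons k hk)
    rw [hν h]; unfold dogma; rw [hd]; simp
  have hξ'h : ξ'.val h = ((1 + ε) / 2) * ξ.val h := by
    rw [hξ' h, hνξ]; ring
  refine ⟨hνξ, hξ'h, ?_⟩
  intro hΓ πt a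
  simp only [Vact, V]
  set p : Policy A E := fun h' => if h' = h then a else πt h' with hp
  set t := h.length + 1 with ht
  have hν0 : 0 < ν.val h := hνξ ▸ hpos
  have hε' : (0:ℝ) < 1 + ε := by linarith
  have hξ'0 : 0 < ξ'.val h := by rw [hξ'h]; positivity
  have hSnn : ∀ (μ : CCS A E) (n : ℕ),
      0 ≤ ∑ es : Fin (n + 1) → E, r (es (Fin.last n)) * μ.val (extendH p h (List.ofFn es)) :=
    fun μ n => Finset.sum_nonneg fun es _ => mul_nonneg (hr _).1 (μ.nonneg _)
  have hSle : ∀ (μ : CCS A E) (n : ℕ),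
      (∑ es : Fin (n + 1) → E, r (es (Fin.last n)) * μ.val (extendH p h (List.ofFn es))) ≤ 1 := by
    intro μ n
    calc (∑ es : Fin (n + 1) → E, r (es (Fin.last n)) * μ.val (extendH p h (List.ofFn es)))
        ≤ ∑ es : Fin (n + 1) → E, μ.val (extendH p h (List.ofFn es)) :=
          Finset.sum_le_sum fun es _ => mul_le_of_le_one_left (μ.nonneg _) (hr _).2
      _ ≤ μ.val h := sum_extendH_le μ p _ h
      _ ≤ 1 := μ.le_one h
  have hsum : ∀ μ : CCS A E, Summable fun n =>
      γ (t + n) * ∑ es : Fin (n + 1) → E, r (es (Fin.last n)) * μ.val (extendH p h (List.ofFn es)) := by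
    intro μ
    refine Summable.of_nonneg_of_le (fun n => mul_nonneg (hγ0 _) (hSnn μ n)) (fun n => ?_)
      (((summable_nat_add_iff t).2 hγs).congr fun n => by rw [add_comm])
    calc γ (t + n) * ∑ es : Fin (n + 1) → E, r (es (Fin.last n)) * μ.val (extendH p h (List.ofFn es))
        ≤ γ (t + n) * 1 := mul_le_mul_of_nonneg_left (hSle μ n) (hγ0 _)
      _ = γ (t + n) := mul_one _
  have hT : (∑' n : ℕ, γ (t + n) *
        ∑ es : Fin (n + 1) → E, r (es (Fin.last n)) * ξ'.val (extendH p h (List.ofFn es)))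
      = (1 / 2) * (∑' n : ℕ, γ (t + n) *
          ∑ es : Fin (n + 1) → E, r (es (Fin.last n)) * ν.val (extendH p h (List.ofFn es)))
        + (ε / 2) * (∑' n : ℕ, γ (t + n) *
          ∑ es : Fin (n + 1) → E, r (es (Fin.last n)) * ξ.val (extendH p h (List.ofFn es))) := by
    have h1 : ∀ n : ℕ, γ (t + n) *
        ∑ es : Fin (n + 1) → E, r (es (Fin.last n)) * ξ'.val (extendH p h (List.ofFn es))
      = (1 / 2) * (γ (t + n) *
          ∑ es : Fin (n + 1) → E, r (es (Fin.last n)) * ν.val (extendH p h (List.ofFn es)))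
        + (ε / 2) * (γ (t + n) *
          ∑ es : Fin (n + 1) → E, r (es (Fin.last n)) * ξ.val (extendH p h (List.ofFn es))) := by
      intro n
      have h2 : (∑ es : Fin (n + 1) → E, r (es (Fin.last n)) * ξ'.val (extendH p h (List.ofFn es)))
          = (1 / 2) * (∑ es : Fin (n + 1) → E, r (es (Fin.last n)) * ν.val (extendH p h (List.ofFn es)))
            + (ε / 2) * (∑ es : Fin (n + 1) → E, r (es (Fin.last n)) * ξ.val (extendH p h (List.ofFn es))) := by
        rw [Finset.mul_sum, Finset.mul_sum, ← Finset.sum_add_distrib]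
        exact Finset.sum_congr rfl fun es _ => by rw [hξ']; ring
      rw [h2]; ring
    rw [tsum_congr h1, Summable.tsum_add ((hsum ν).mul_left _) ((hsum ξ).mul_left _),
      tsum_mul_left, tsum_mul_left]
  rw [if_pos ⟨hΓ, hξ'0⟩, if_pos ⟨hΓ, hν0⟩, if_pos ⟨hΓ, hpos⟩, hT, hνξ, hξ'h]
  have hG : Gam γ t ≠ 0 := ne_of_gt hΓ
  have hc : ξ.val h ≠ 0 := ne_of_gt hpos
  have hε'' : (1 : ℝ) + ε ≠ 0 := ne_of_gt hε'
  field_simp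
end

section
/- Let ξ be a CCS, π a policy, e⁰ ∈ E with r(e⁰) = 0, ε ∈ (0,1], ν the π-dogmatic environment for ξ, and ξ' := (1/2)·ν + (ε/2)·ξ. Then for every history h = ae_{<t} consistent with π with Γ_t > 0 and ξ(e_{<t} ∣ a_{<t}) > 0, and for α := π(h), the on-policy values agree: V^π_{ξ'}(hα) = V^π_ξ(hα), and consequently V^π_{ξ'}(h) = V^π_ξ(h). -/
/-! Along `π` the dogmatic environment `ν` coincides with `ξ`, so `ξ' = ((1 + ε) / 2) • ξ`
on every `π`-consistent history. The on-policy value is a ratio of masses of such histories,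
hence it is unchanged by this common positive factor. -/

open scoped Classical

theorem Consistent.append_policy {A E : Type*} {π : Policy A E} {h : Hist A E}
    (hc : Consistent π h) (e : E) : Consistent π (h ++ [(π h, e)]) := by
  intro k hk
  rw [List.length_append, List.length_singleton] at hk
  rcases Nat.lt_succ_iff_lt_or_eq.mp hk with hk | rfl
  · simpa [List.getElem_append_left hk, List.take_append_of_le_length hk.le] using hc k hk
  · simp

theorem Consistent.extendH {A E : Type*} {π : Policy A E} {h : Hist A E}
    (hc : Consistent π h) (es : List E) : Consistent π (extendH π h es) := by
  induction es generalizing h with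
  | nil => exact hc
  | cons e es ih => exact ih (hc.append_policy e)

theorem dogmaAux_of_consistent {A E : Type*} [Fintype E] (ξ : CCS A E) (π : Policy A E)
    (e0 : E) (pre rest : Hist A E) (hc : Consistent π (pre ++ rest)) :
    dogmaAux ξ π e0 pre rest = ξ.val (pre ++ rest) := by
  induction rest generalizing pre with
  | nil => simp [dogmaAux]
  | cons p rest ih =>
    obtain ⟨a, e⟩ := p
    have ha : a = π pre := by simpa using hc pre.length (by simp)
    have hc' : Consistent π (pre ++ [(a, e)] ++ rest) := by simpa using hc
    simpa [dogmaAux, ha] using ih (pre ++ [(a, e)]) hc'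

theorem dogma_of_consistent {A E : Type*} [Fintype E] (ξ : CCS A E) (π : Policy A E)
    (e0 : E) {h : Hist A E} (hc : Consistent π h) : dogma ξ π e0 h = ξ.val h :=
  dogmaAux_of_consistent ξ π e0 [] h hc

theorem Vact_policy {A E : Type*} [Fintype E] (γ : ℕ → ℝ) (r : E → ℝ) (π : Policy A E)
    (ν : CCS A E) (h : Hist A E) : Vact γ r π ν h (π h) = V γ r π ν h := by
  have hπ : (fun h' => if h' = h then π h else π h') = π := by
    funext h'
    split_ifs with hh <;> simp [hh]
  rw [Vact, hπ]

theorem V_eq_of_extendH_eq_mul {A E : Type*} [Fintype E] (γ : ℕ → ℝ) (r : E → ℝ)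
    (π : Policy A E) (ν ν' : CCS A E) (h : Hist A E) {c : ℝ} (hc : 0 < c)
    (hνν' : ∀ es : List E, ν'.val (extendH π h es) = c * ν.val (extendH π h es)) :
    V γ r π ν' h = V γ r π ν h := by
  have hh : ν'.val h = c * ν.val h := hνν' []
  have hsum (n : ℕ) :
      ∑ es : Fin (n + 1) → E, r (es (Fin.last n)) * ν'.val (extendH π h (List.ofFn es)) =
        c * ∑ es : Fin (n + 1) → E, r (es (Fin.last n)) * ν.val (extendH π h (List.ofFn es)) := by
    rw [Finset.mul_sum]
    exact Finset.sum_congr rfl fun es _ => by rw [hνν']; ring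
  simp only [V, hh, hsum, mul_pos_iff_of_pos_left hc, mul_left_comm _ c, tsum_mul_left]
  split_ifs
  · field_simp
  · rfl

theorem dogmatic_on_policy_general {A E : Type*} [Fintype E] (γ : ℕ → ℝ) (r : E → ℝ)
    (ξ : CCS A E) (π : Policy A E) (e0 : E)
    (ε : ℝ) (hε0 : 0 < ε)
    (ν ξ' : CCS A E)
    (hν : ∀ h : Hist A E, ν.val h = dogma ξ π e0 h)
    (hξ' : ∀ h : Hist A E, ξ'.val h = (1 / 2) * ν.val h + (ε / 2) * ξ.val h)
    (h : Hist A E) (hcons : Consistent π h) :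
    Vact γ r π ξ' h (π h) = Vact γ r π ξ h (π h) ∧
    V γ r π ξ' h = V γ r π ξ h := by
  have hscale : ∀ es : List E,
      ξ'.val (extendH π h es) = (1 + ε) / 2 * ξ.val (extendH π h es) := by
    intro es
    rw [hξ', hν, dogma_of_consistent ξ π e0 (hcons.extendH es)]
    ring
  have hV : V γ r π ξ' h = V γ r π ξ h :=
    V_eq_of_extendH_eq_mul γ r π ξ ξ' h (by positivity) hscale
  rw [Vact_policy, Vact_policy]
  exact ⟨hV, hV⟩

/-- **On-policy values agree.** With `ξ' = (1/2)·ν + (ε/2)·ξ` for the `π`-dogmatic `ν`,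
on `π`-consistent histories the on-policy values of `ξ'` and `ξ` coincide. -/
theorem dogmatic_on_policy {A E : Type*} [Fintype A] [Nonempty A] [Fintype E] [Nonempty E]
    (γ : ℕ → ℝ) (hγ0 : ∀ t, 0 ≤ γ t) (hγs : Summable γ)
    (r : E → ℝ) (hr : ∀ e : E, 0 ≤ r e ∧ r e ≤ 1)
    (ξ : CCS A E) (π : Policy A E) (e0 : E) (hr0 : r e0 = 0)
    (ε : ℝ) (hε0 : 0 < ε) (hε1 : ε ≤ 1)
    (ν ξ' : CCS A E)
    (hν : ∀ h : Hist A E, ν.val h = dogma ξ π e0 h)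
    (hξ' : ∀ h : Hist A E, ξ'.val h = (1 / 2) * ν.val h + (ε / 2) * ξ.val h)
    (h : Hist A E) (hcons : Consistent π h)
    (hΓ : 0 < Gam γ (h.length + 1)) (hpos : 0 < ξ.val h) :
    Vact γ r π ξ' h (π h) = Vact γ r π ξ h (π h) ∧
    V γ r π ξ' h = V γ r π ξ h :=
  dogmatic_on_policy_general γ r ξ π e0 ε hε0 ν ξ' hν hξ' h hcons
end
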